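/- Let C be a finite set of candidate entity pairs, for each p ∈ C let S_p be a set of questions, and let m : α → ℝ satisfy 0 ≤ m(q) ≤ 1 for all questions q. Define benefit(Q) = Σ_{p ∈ C} (1 − ∏_{q ∈ Q ∩ S_p} (1 − m(q))) for each finite question set Q. Then benefit is a submodular set function: for every finite question set Q and every pair of distinct questions q₁, q₂ ∉ Q, benefit(Q ∪ {q₁}) + benefit(Q ∪ {q₂}) ≥ benefit(Q ∪ {q₁, q₂}) + benefit(Q). -/
import Mathlib


/-- `benefit Q = Σ_{p ∈ C} (1 - ∏_{q ∈ Q ∩ S_p} (1 - m q))`, the expected number of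
matches inferred by the labels to `Q`, is a submodular set function. -/
theorem totalBenefit_submodular {α β : Type*} [DecidableEq α]
    (C : Finset β) (S : β → Set α) [∀ p, DecidablePred (· ∈ S p)]
    (m : α → ℝ) (hm : ∀ q, 0 ≤ m q ∧ m q ≤ 1)
    (benefit : Finset α → ℝ)
    (hbenefit : ∀ Q : Finset α,
      benefit Q = ∑ p ∈ C, (1 - ∏ q ∈ Q.filter (· ∈ S p), (1 - m q)))
    (Q : Finset α) (q₁ q₂ : α) (hq₁ : q₁ ∉ Q) (hq₂ : q₂ ∉ Q) (hne : q₁ ≠ q₂) :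
    benefit (Q ∪ {q₁}) + benefit (Q ∪ {q₂}) ≥ benefit (Q ∪ {q₁, q₂}) + benefit Q := by
  have hU1 : Q ∪ {q₁} = insert q₁ Q := by
    ext x; simp [or_comm]
  have hU2 : Q ∪ {q₂} = insert q₂ Q := by
    ext x; simp [or_comm]
  have hU12 : Q ∪ {q₁, q₂} = insert q₁ (insert q₂ Q) := by
    ext x; simp [or_comm, or_assoc]
  rw [hU1, hU2, hU12, hbenefit, hbenefit, hbenefit, hbenefit, ge_iff_le,
    ← Finset.sum_add_distrib, ← Finset.sum_add_distrib]
  apply Finset.sum_le_sum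
  intro p _
  set P := ∏ q ∈ Q.filter (· ∈ S p), (1 - m q) with hP
  have hPnn : 0 ≤ P := Finset.prod_nonneg (fun q _ => by linarith [(hm q).2])
  have key : ∀ (x : α) (R : Finset α), x ∉ R →
      ∏ q ∈ (insert x R).filter (· ∈ S p), (1 - m q)
        = (if x ∈ S p then (1 - m x) else 1) * ∏ q ∈ R.filter (· ∈ S p), (1 - m q) := by
    intro x R hx
    rw [Finset.filter_insert]
    by_cases h : x ∈ S p
    · rw [if_pos h, if_pos h, Finset.prod_insert (by simp [hx])]
    · rw [if_neg h, if_neg h, one_mul]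
  have h2Q : q₂ ∉ Q := hq₂
  have h1 : q₁ ∉ insert q₂ Q := by simp [hne, hq₁]
  rw [key q₁ Q hq₁, key q₂ Q hq₂, key q₁ (insert q₂ Q) h1, key q₂ Q hq₂]
  set a := (if q₁ ∈ S p then (1 - m q₁) else 1) with ha
  set b := (if q₂ ∈ S p then (1 - m q₂) else 1) with hb
  have ha1 : a ≤ 1 := by
    rw [ha]; split
    · linarith [(hm q₁).1]
    · exact le_rfl
  have hb1 : b ≤ 1 := by
    rw [hb]; split
    · linarith [(hm q₂).1]
    · exact le_rfl
  have ha0 : 0 ≤ a := by rw [ha]; split <;> [linarith [(hm q₁).2]; norm_num]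
  have hb0 : 0 ≤ b := by rw [hb]; split <;> [linarith [(hm q₂).2]; norm_num]
  rw [← hP]
  nlinarith [mul_nonneg hPnn (mul_nonneg (by linarith : (0:ℝ) ≤ 1 - a) (by linarith : (0:ℝ) ≤ 1 - b))]
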